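/- arXiv:1901.11151 — 5 statements merged into one kernel-verified Lean document; each statement's English description precedes it below -/
import Mathlib

section
/- Let p be an odd prime and λ₁ ∈ F_p. Setting λ₂ = 0, the double sum ∑_{x,t ∈ F_p} x^((p-1)/2) (x − t(t−1)(−λ₁))^((p-1)/2) (x − t(t−λ₁)(−1))^((p-1)/2) is congruent modulo p to ∑_{j=0}^{(p-1)/2} C((p-1)/2, j)² λ₁^j. -/
open Finset

lemma sum_pow_zmod (p : ℕ) [Fact p.Prime] (k : ℕ) (hk : k ≠ 0) :
    ∑ x : ZMod p, x ^ k = if (p - 1) ∣ k then -1 else 0 := by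
  classical
  have h := FiniteField.sum_pow_units (ZMod p) k
  rw [ZMod.card] at h
  rw [← h]
  let φ : (ZMod p)ˣ ↪ ZMod p := ⟨Units.val, Units.val_injective⟩
  have huniv : univ.map φ = univ \ {0} := by
    ext x
    simpa only [mem_map, mem_univ, Function.Embedding.coeFn_mk, true_and, mem_sdiff,
      mem_singleton, φ] using
        Iff.trans (Iff.rfl : (∃ a : (ZMod p)ˣ, ↑a = x) ↔ IsUnit x) isUnit_iff_ne_zero
  calc
    ∑ x : ZMod p, x ^ k = ∑ x ∈ univ \ {(0 : ZMod p)}, x ^ k := by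
      rw [← sum_sdiff ({0} : Finset (ZMod p)).subset_univ, sum_singleton, zero_pow hk, add_zero]
    _ = ∑ x : (ZMod p)ˣ, (x : ZMod p) ^ k := by simp [φ, ← huniv, univ.sum_map φ]

lemma expand_sum (p : ℕ) [Fact p.Prime] (m a b : ℕ) (A B : ZMod p) :
    ∑ x : ZMod p, x ^ m * (x - A) ^ a * (x - B) ^ b
      = ∑ i ∈ range (a + 1), ∑ j ∈ range (b + 1),
          (((-1) ^ (i + a) * A ^ (a - i) * (a.choose i : ZMod p)) *
           ((-1) ^ (j + b) * B ^ (b - j) * (b.choose j : ZMod p))) *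
          ∑ x : ZMod p, x ^ (m + i + j) := by
  have step : ∀ x : ZMod p, x ^ m * (x - A) ^ a * (x - B) ^ b
      = ∑ i ∈ range (a + 1), ∑ j ∈ range (b + 1),
          (((-1) ^ (i + a) * A ^ (a - i) * (a.choose i : ZMod p)) *
           ((-1) ^ (j + b) * B ^ (b - j) * (b.choose j : ZMod p))) * x ^ (m + i + j) := by
    intro x
    rw [sub_pow x A a, sub_pow x B b, mul_assoc, Finset.sum_mul_sum, Finset.mul_sum]
    refine Finset.sum_congr rfl fun i _ => ?_
    rw [Finset.mul_sum]
    refine Finset.sum_congr rfl fun j _ => ?_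
    rw [pow_add, pow_add]
    ring
  rw [Finset.sum_congr rfl fun x _ => step x, Finset.sum_comm]
  refine Finset.sum_congr rfl fun i _ => ?_
  rw [Finset.sum_comm]
  refine Finset.sum_congr rfl fun j _ => ?_
  rw [Finset.mul_sum]

lemma dvd_helper (q k : ℕ) (hq : q ≠ 0) (h1 : q ≤ k) (h2 : k ≤ 3 * q) (hd : 2 * q ∣ k) :
    k = 2 * q := by
  obtain ⟨c, rfl⟩ := hd
  have hq1 : 1 ≤ q := Nat.one_le_iff_ne_zero.mpr hq
  have hc1 : 1 ≤ c := by
    rcases Nat.eq_zero_or_pos c with h | h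
    · subst h; simp at h1; omega
    · exact h
  have hc2 : c ≤ 1 := by
    by_contra h
    push_neg at h
    have : 2 * q * 2 ≤ 2 * q * c := Nat.mul_le_mul_left _ h
    omega
  have : c = 1 := by omega
  subst this; ring

lemma sum_T (p : ℕ) [Fact p.Prime] (q a b : ℕ) (h2q : p - 1 = 2 * q) (hq : q ≠ 0)
    (hab : a + b = q) (A B : ZMod p) :
    ∑ x : ZMod p, x ^ q * (x - A) ^ a * (x - B) ^ b = -1 := by
  rw [expand_sum]
  have key : ∀ i ∈ range (a + 1), ∀ j ∈ range (b + 1),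
      (∑ x : ZMod p, x ^ (q + i + j)) = if i = a ∧ j = b then (-1 : ZMod p) else 0 := by
    intro i hi j hj
    rw [mem_range] at hi hj
    rw [sum_pow_zmod p _ (by omega), h2q]
    by_cases h : i = a ∧ j = b
    · obtain ⟨rfl, rfl⟩ := h
      rw [if_pos (show 2 * q ∣ q + i + j from ⟨1, by omega⟩), if_pos ⟨rfl, rfl⟩]
    · rw [if_neg h, if_neg]
      intro hd
      have := dvd_helper q (q + i + j) hq (by omega) (by omega) hd
      exact h ⟨by omega, by omega⟩
  calc ∑ i ∈ range (a + 1), ∑ j ∈ range (b + 1),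
        (((-1) ^ (i + a) * A ^ (a - i) * (a.choose i : ZMod p)) *
         ((-1) ^ (j + b) * B ^ (b - j) * (b.choose j : ZMod p))) *
        ∑ x : ZMod p, x ^ (q + i + j)
      = ∑ i ∈ range (a + 1), ∑ j ∈ range (b + 1),
        (((-1) ^ (i + a) * A ^ (a - i) * (a.choose i : ZMod p)) *
         ((-1) ^ (j + b) * B ^ (b - j) * (b.choose j : ZMod p))) *
        (if i = a ∧ j = b then (-1 : ZMod p) else 0) := by
        refine Finset.sum_congr rfl fun i hi => Finset.sum_congr rfl fun j hj => ?_
        rw [key i hi j hj]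
    _ = -1 := by
        rw [Finset.sum_eq_single_of_mem a (by simp)]
        · rw [Finset.sum_eq_single_of_mem b (by simp)]
          · simp
          · intro j hj hne; simp [hne]
        · intro i hi hne
          refine Finset.sum_eq_zero fun j hj => ?_
          simp [hne]

lemma sum_X (p : ℕ) [Fact p.Prime] (q : ℕ) (h2q : p - 1 = 2 * q) (hq : q ≠ 0) (A B : ZMod p) :
    ∑ x : ZMod p, x ^ q * (x - A) ^ q * (x - B) ^ q
      = -((-1) ^ q * ∑ i ∈ range (q + 1), ((q.choose i : ZMod p)) ^ 2 * A ^ (q - i) * B ^ i) := by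
  rw [expand_sum p q q q A B]
  have key : ∀ i ∈ range (q + 1), ∀ j ∈ range (q + 1),
      (∑ x : ZMod p, x ^ (q + i + j)) = if j = q - i then (-1 : ZMod p) else 0 := by
    intro i hi j hj
    rw [mem_range] at hi hj
    rw [sum_pow_zmod p _ (by omega), h2q]
    by_cases h : j = q - i
    · subst h
      rw [if_pos (show 2 * q ∣ q + i + (q - i) from ⟨1, by omega⟩), if_pos rfl]
    · rw [if_neg h, if_neg]
      intro hd
      have := dvd_helper q (q + i + j) hq (by omega) (by omega) hd
      exact h (by omega)
  calc ∑ i ∈ range (q + 1), ∑ j ∈ range (q + 1),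
        (((-1) ^ (i + q) * A ^ (q - i) * (q.choose i : ZMod p)) *
         ((-1) ^ (j + q) * B ^ (q - j) * (q.choose j : ZMod p))) *
        ∑ x : ZMod p, x ^ (q + i + j)
      = ∑ i ∈ range (q + 1), ∑ j ∈ range (q + 1),
        (((-1) ^ (i + q) * A ^ (q - i) * (q.choose i : ZMod p)) *
         ((-1) ^ (j + q) * B ^ (q - j) * (q.choose j : ZMod p))) *
        (if j = q - i then (-1 : ZMod p) else 0) := by
        refine Finset.sum_congr rfl fun i hi => Finset.sum_congr rfl fun j hj => ?_
        rw [key i hi j hj]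
    _ = ∑ i ∈ range (q + 1), -(-1) ^ q * (((q.choose i : ZMod p)) ^ 2 * A ^ (q - i) * B ^ i) := by
        refine Finset.sum_congr rfl fun i hi => ?_
        rw [mem_range] at hi
        rw [Finset.sum_eq_single_of_mem (q - i) (by rw [mem_range]; omega)]
        · rw [if_pos rfl, Nat.choose_symm (by omega : i ≤ q),
            show q - (q - i) = i from by omega]
          have hsign : (-1 : ZMod p) ^ (i + q) * (-1) ^ (q - i + q) = (-1) ^ q := by
            rw [← pow_add, show i + q + (q - i + q) = q + 2 * q from by omega, pow_add, pow_mul]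
            simp
          linear_combination (-(A ^ (q - i) * B ^ i * ((q.choose i : ZMod p)) ^ 2)) * hsign
        · intro j hj hne; simp [hne]
    _ = -((-1) ^ q * ∑ i ∈ range (q + 1), ((q.choose i : ZMod p)) ^ 2 * A ^ (q - i) * B ^ i) := by
        rw [Finset.mul_sum, ← Finset.sum_neg_distrib]
        refine Finset.sum_congr rfl fun i _ => ?_
        ring

theorem stmt_6 (p : ℕ) [Fact p.Prime] (hodd : p ≠ 2) (lam1 : ZMod p) :
    (∑ x : ZMod p, ∑ t : ZMod p,
        x ^ ((p - 1) / 2) *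
          (x - t * (t - 1) * (-lam1)) ^ ((p - 1) / 2) *
          (x - t * (t - lam1) * (-1)) ^ ((p - 1) / 2))
      = ∑ j ∈ Finset.range ((p - 1) / 2 + 1),
          ((((p - 1) / 2).choose j) ^ 2 : ZMod p) * lam1 ^ j := by
  have hprime : p.Prime := Fact.out
  obtain ⟨m, hm⟩ := hprime.odd_of_ne_two hodd
  have hp3 : 3 ≤ p := by
    have := hprime.two_le
    omega
  set q := (p - 1) / 2 with hqdef
  have h2q : p - 1 = 2 * q := by omega
  have hq : q ≠ 0 := by omega
  have hsign : ((-1 : ZMod p) ^ q) * ((-1) ^ q) = 1 := by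
    rw [← pow_add, ← two_mul, pow_mul]
    simp
  rw [Finset.sum_comm]
  calc ∑ t : ZMod p, ∑ x : ZMod p,
        x ^ q * (x - t * (t - 1) * (-lam1)) ^ q * (x - t * (t - lam1) * (-1)) ^ q
      = ∑ t : ZMod p, -((-1) ^ q * ∑ i ∈ range (q + 1), ((q.choose i : ZMod p)) ^ 2 *
          (t * (t - 1) * (-lam1)) ^ (q - i) * (t * (t - lam1) * (-1)) ^ i) := by
        exact Finset.sum_congr rfl fun t _ => sum_X p q h2q hq _ _
    _ = -((-1) ^ q * ∑ i ∈ range (q + 1), ((q.choose i : ZMod p)) ^ 2 *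
          ∑ t : ZMod p, (t * (t - 1) * (-lam1)) ^ (q - i) * (t * (t - lam1) * (-1)) ^ i) := by
        rw [Finset.sum_neg_distrib, ← Finset.mul_sum, Finset.sum_comm]
        congr 2
        refine Finset.sum_congr rfl fun i _ => ?_
        rw [Finset.mul_sum]
        exact Finset.sum_congr rfl fun t _ => by ring
    _ = -((-1) ^ q * ∑ i ∈ range (q + 1), ((q.choose i : ZMod p)) ^ 2 *
          ((-1) ^ q * lam1 ^ (q - i) * (-1))) := by
        congr 1
        congr 1
        refine Finset.sum_congr rfl fun i hi => ?_
        rw [mem_range] at hi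
        congr 1
        have hterm : ∀ t : ZMod p,
            (t * (t - 1) * (-lam1)) ^ (q - i) * (t * (t - lam1) * (-1)) ^ i
              = (-1) ^ q * lam1 ^ (q - i) * (t ^ q * (t - 1) ^ (q - i) * (t - lam1) ^ i) := by
          intro t
          have h1 : (-1 : ZMod p) ^ (q - i) * (-1) ^ i = (-1) ^ q := by
            rw [← pow_add, show q - i + i = q from by omega]
          have h2 : t ^ (q - i) * t ^ i = t ^ q := by
            rw [← pow_add, show q - i + i = q from by omega]
          calc (t * (t - 1) * (-lam1)) ^ (q - i) * (t * (t - lam1) * (-1)) ^ i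
              = ((-1) ^ (q - i) * (-1) ^ i) * (t ^ (q - i) * t ^ i) *
                ((t - 1) ^ (q - i) * lam1 ^ (q - i) * (t - lam1) ^ i) := by
                rw [mul_pow, mul_pow, mul_pow, mul_pow, neg_pow lam1 (q - i)]
                ring
            _ = (-1) ^ q * lam1 ^ (q - i) * (t ^ q * (t - 1) ^ (q - i) * (t - lam1) ^ i) := by
                rw [h1, h2]; ring
        rw [Finset.sum_congr rfl fun t _ => hterm t, ← Finset.mul_sum,
          sum_T p q (q - i) i h2q hq (by omega) 1 lam1]
    _ = ∑ i ∈ range (q + 1), ((q.choose i : ZMod p)) ^ 2 * lam1 ^ (q - i) := by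
        rw [Finset.mul_sum, ← Finset.sum_neg_distrib]
        refine Finset.sum_congr rfl fun i _ => ?_
        linear_combination (((q.choose i : ZMod p)) ^ 2 * lam1 ^ (q - i)) * hsign
    _ = ∑ j ∈ Finset.range (q + 1), ((q.choose j : ZMod p)) ^ 2 * lam1 ^ j := by
        rw [← Finset.sum_range_reflect (fun j => ((q.choose j : ZMod p)) ^ 2 * lam1 ^ j) (q + 1)]
        refine Finset.sum_congr rfl fun i hi => ?_
        rw [mem_range] at hi
        rw [show q + 1 - 1 - i = q - i from by omega, Nat.choose_symm (by omega : i ≤ q)]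
end

section
/- Let p be an odd prime and z₁, z₂ ∈ F_p with z₁ ≠ 0 and z₂ ≠ 0. Then ∑_{x,v ∈ F_p} (v(1−v)x(1−x)(1−z₂x−z₁v))^((p-1)/2) is congruent modulo p to ∑_{i+j+k=(p-1)/2} M((p-1)/2; i,j,k) · C((p-1)/2, i) · C((p-1)/2, k) · z₁^i z₂^k, where M denotes the multinomial coefficient. -/
open Finset

/-- The multinomial coefficient `N!/(i!j!k!)`, defined to be `0` unless `i+j+k = N`. -/
def multinomial3 (N i j k : ℕ) : ℕ :=
  if i + j + k = N then N.factorial / (i.factorial * j.factorial * k.factorial) else 0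

lemma gsum (p : ℕ) [Fact p.Prime] (e : ℕ) (he : e ≠ 0) :
    ∑ x : ZMod p, x ^ e = if (p - 1) ∣ e then (-1 : ZMod p) else 0 := by
  classical
  have hcard : Fintype.card (ZMod p) = p := ZMod.card p
  let φ : (ZMod p)ˣ ↪ ZMod p := ⟨fun x ↦ x, fun _ _ => Units.ext⟩
  have himg : Finset.univ.map φ = Finset.univ \ {0} := by
    ext x
    simp only [mem_map, mem_univ, Function.Embedding.coeFn_mk, true_and, mem_sdiff,
      mem_singleton, φ]
    exact isUnit_iff_ne_zero
  calc ∑ x : ZMod p, x ^ e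
      = ∑ x ∈ Finset.univ \ {(0 : ZMod p)}, x ^ e := by
        rw [← Finset.sum_sdiff (Finset.subset_univ {0}), Finset.sum_singleton, zero_pow he,
          add_zero]
    _ = ∑ x : (ZMod p)ˣ, ((x : ZMod p)) ^ e := by
        rw [← himg, Finset.sum_map]; simp [φ]; rfl
    _ = if (p - 1) ∣ e then -1 else 0 := by
        have h := FiniteField.sum_pow_units (ZMod p) e
        rw [hcard] at h
        rw [← h]

lemma A_eval (p : ℕ) [Fact p.Prime] (n : ℕ) (h2n : 2 * n = p - 1) (hn1 : n ≠ 0)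
    (m : ℕ) (hm : m ≤ n) :
    ∑ x : ZMod p, (x * (1 - x)) ^ n * x ^ m
      = -((-1 : ZMod p) ^ (n - m) * (n.choose m : ZMod p)) := by
  have hp2 : 2 ≤ p := (Fact.out : p.Prime).two_le
  have step : ∀ x : ZMod p, (x * (1 - x)) ^ n * x ^ m
      = ∑ a ∈ range (n + 1), ((-1 : ZMod p) ^ a * (n.choose a : ZMod p)) * x ^ (n + m + a) := by
    intro x
    have h1 : (1 : ZMod p) - x = -x + 1 := by ring
    rw [mul_pow, h1, add_pow]
    rw [show x ^ n * (∑ a ∈ range (n+1), (-x) ^ a * 1 ^ (n - a) * (n.choose a : ZMod p)) * x ^ m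
        = ∑ a ∈ range (n+1), x ^ n * ((-x) ^ a * 1 ^ (n - a) * (n.choose a : ZMod p)) * x ^ m by
      rw [Finset.mul_sum, Finset.sum_mul]]
    refine Finset.sum_congr rfl fun a ha => ?_
    rw [neg_pow, one_pow, pow_add, pow_add]
    ring
  simp only [step]
  rw [Finset.sum_comm]
  simp only [← Finset.mul_sum]
  rw [Finset.sum_eq_single (n - m)]
  · rw [gsum p (n + m + (n - m)) (by omega), if_pos (by exact ⟨1, by omega⟩),
      Nat.choose_symm hm]
    ring
  · intro a ha hane
    rw [gsum p (n + m + a) (by omega), if_neg, mul_zero]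
    intro hdvd
    have hle : p - 1 ≤ n + m + a := Nat.le_of_dvd (by omega) hdvd
    have h1 : (p - 1) ∣ (n + m + a - (p - 1)) := Nat.dvd_sub hdvd dvd_rfl
    have ha' : a ≤ n := by have := mem_range.mp ha; omega
    have h2 : n + m + a - (p - 1) < p - 1 := by omega
    have h3 := Nat.eq_zero_of_dvd_of_lt h1 h2
    omega
  · intro h
    exact absurd (mem_range.mpr (by omega)) h


lemma B_eval (p : ℕ) [Fact p.Prime] (nn m : ℕ) (c w : ZMod p) :
    ∑ x : ZMod p, (x * (1 - x)) ^ nn * (c - w * x) ^ m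
      = ∑ k ∈ range (m + 1), (m.choose k : ZMod p) * (-w) ^ k * c ^ (m - k) *
          ∑ x : ZMod p, (x * (1 - x)) ^ nn * x ^ k := by
  have step : ∀ x : ZMod p, (x * (1 - x)) ^ nn * (c - w * x) ^ m
      = ∑ k ∈ range (m + 1),
          ((m.choose k : ZMod p) * (-w) ^ k * c ^ (m - k)) * ((x * (1 - x)) ^ nn * x ^ k) := by
    intro x
    have h1 : c - w * x = -(w * x) + c := by ring
    rw [h1, add_pow, Finset.mul_sum]
    refine Finset.sum_congr rfl fun k hk => ?_
    rw [neg_pow, neg_pow, mul_pow]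
    ring
  simp only [step]
  rw [Finset.sum_comm]
  exact Finset.sum_congr rfl fun k hk => by rw [← Finset.mul_sum]


lemma mult3 (i j k : ℕ) :
    multinomial3 (i + j + k) i j k = (i + j + k).choose i * (j + k).choose k := by
  unfold multinomial3
  rw [if_pos rfl]
  have h1 : (i + j + k).choose i * i.factorial * (j + k).factorial = (i + j + k).factorial := by
    have := Nat.choose_mul_factorial_mul_factorial (show i ≤ i + j + k by omega)
    rwa [show i + j + k - i = j + k by omega] at this
  have h2 : (j + k).choose k * k.factorial * j.factorial = (j + k).factorial := by
    have := Nat.choose_mul_factorial_mul_factorial (show k ≤ j + k by omega)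
    rwa [show j + k - k = j by omega] at this
  have hpos : 0 < i.factorial * j.factorial * k.factorial := by positivity
  rw [Nat.div_eq_of_eq_mul_left hpos]
  rw [← h1, ← h2]; ring

theorem stmt_7 (p : ℕ) [Fact p.Prime] (hodd : p ≠ 2) (z1 z2 : ZMod p)
    (hz1 : z1 ≠ 0) (hz2 : z2 ≠ 0) :
    (∑ x : ZMod p, ∑ v : ZMod p,
        (v * (1 - v) * x * (1 - x) * (1 - z2 * x - z1 * v)) ^ ((p - 1) / 2))
      = ∑ i ∈ Finset.range ((p - 1) / 2 + 1), ∑ j ∈ Finset.range ((p - 1) / 2 + 1),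
          ∑ k ∈ Finset.range ((p - 1) / 2 + 1),
            if i + j + k = (p - 1) / 2 then
              (multinomial3 ((p - 1) / 2) i j k : ZMod p) *
                (((p - 1) / 2).choose i : ZMod p) * (((p - 1) / 2).choose k : ZMod p) *
                z1 ^ i * z2 ^ k
            else 0 := by
  classical
  have hp : p.Prime := Fact.out
  have hpodd : p % 2 = 1 := Nat.odd_iff.mp (hp.odd_of_ne_two hodd)
  have hp2 : 2 ≤ p := hp.two_le
  set n := (p - 1) / 2 with hn
  have h2n : 2 * n = p - 1 := by omega
  have hn1 : n ≠ 0 := by omega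
  have hA : ∀ m : ℕ, m ≤ n → ∑ x : ZMod p, (x * (1 - x)) ^ n * x ^ m
      = -((-1 : ZMod p) ^ (n - m) * (n.choose m : ZMod p)) := A_eval p n h2n hn1
  -- LHS chain
  have hL : (∑ x : ZMod p, ∑ v : ZMod p,
        (v * (1 - v) * x * (1 - x) * (1 - z2 * x - z1 * v)) ^ n)
      = ∑ i ∈ range (n + 1), ∑ k ∈ range (n - i + 1),
          (n.choose i : ZMod p) * ((n - i).choose k : ZMod p) * (n.choose i : ZMod p) *
            (n.choose k : ZMod p) * z1 ^ i * z2 ^ k := by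
    calc ∑ x : ZMod p, ∑ v : ZMod p,
          (v * (1 - v) * x * (1 - x) * (1 - z2 * x - z1 * v)) ^ n
        = ∑ x : ZMod p, (x * (1 - x)) ^ n *
            ∑ v : ZMod p, (v * (1 - v)) ^ n * ((1 - z2 * x) - z1 * v) ^ n := by
          refine Finset.sum_congr rfl fun x _ => ?_
          rw [Finset.mul_sum]
          refine Finset.sum_congr rfl fun v _ => ?_
          rw [← mul_pow, ← mul_pow]
          congr 1
          ring
      _ = ∑ x : ZMod p, (x * (1 - x)) ^ n *
            ∑ i ∈ range (n + 1), (n.choose i : ZMod p) * (-z1) ^ i * (1 - z2 * x) ^ (n - i) *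
              ∑ v : ZMod p, (v * (1 - v)) ^ n * v ^ i := by
          refine Finset.sum_congr rfl fun x _ => ?_
          rw [B_eval p n n (1 - z2 * x) z1]
      _ = ∑ i ∈ range (n + 1),
            ((n.choose i : ZMod p) * (-z1) ^ i * ∑ v : ZMod p, (v * (1 - v)) ^ n * v ^ i) *
              ∑ x : ZMod p, (x * (1 - x)) ^ n * (1 - z2 * x) ^ (n - i) := by
          simp only [Finset.mul_sum]
          rw [Finset.sum_comm]
          refine Finset.sum_congr rfl fun i _ => ?_
          refine Finset.sum_congr rfl fun x _ => ?_
          rw [Finset.sum_mul]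
          refine Finset.sum_congr rfl fun v _ => ?_
          ring
      _ = ∑ i ∈ range (n + 1),
            ((n.choose i : ZMod p) * (-z1) ^ i * ∑ v : ZMod p, (v * (1 - v)) ^ n * v ^ i) *
              ∑ k ∈ range (n - i + 1), ((n - i).choose k : ZMod p) * (-z2) ^ k *
                (1 : ZMod p) ^ (n - i - k) * ∑ x : ZMod p, (x * (1 - x)) ^ n * x ^ k := by
          refine Finset.sum_congr rfl fun i _ => ?_
          rw [B_eval p n (n - i) 1 z2]
      _ = ∑ i ∈ range (n + 1), ∑ k ∈ range (n - i + 1),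
            (n.choose i : ZMod p) * ((n - i).choose k : ZMod p) * (n.choose i : ZMod p) *
              (n.choose k : ZMod p) * z1 ^ i * z2 ^ k := by
          refine Finset.sum_congr rfl fun i hi => ?_
          have hi' : i ≤ n := by have := mem_range.mp hi; omega
          rw [hA i hi', Finset.mul_sum]
          refine Finset.sum_congr rfl fun k hk => ?_
          have hk' : k ≤ n := by have := mem_range.mp hk; omega
          rw [hA k hk']
          have e : (((-1 : ZMod p) ^ (n - i) * (-1) ^ i) * ((-1 : ZMod p) ^ (n - k) * (-1) ^ k))
              = 1 := by
            rw [← pow_add, ← pow_add, ← pow_add, show n - i + i + (n - k + k) = 2 * n by omega,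
              pow_mul]
            norm_num
          rw [neg_pow z1, neg_pow z2, one_pow]
          linear_combination ((n.choose i : ZMod p) * ((n - i).choose k : ZMod p) *
            (n.choose i : ZMod p) * (n.choose k : ZMod p) * z1 ^ i * z2 ^ k) * e
  -- RHS chain
  have R2 : ∀ (g : ℕ → ZMod p) (i k : ℕ),
      (∑ j ∈ range (n + 1), if i + j + k = n then g j else 0)
        = if i + k ≤ n then g (n - (i + k)) else 0 := by
    intro g i k
    by_cases h : i + k ≤ n
    · rw [if_pos h, Finset.sum_eq_single (n - (i + k))]
      · rw [if_pos (by omega)]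
      · intro j hj hne
        exact if_neg (by omega)
      · intro hmem
        exact absurd (mem_range.mpr (by omega)) hmem
    · rw [if_neg h]
      exact Finset.sum_eq_zero fun j hj => if_neg (by omega)
  have hR : (∑ i ∈ range (n + 1), ∑ j ∈ range (n + 1), ∑ k ∈ range (n + 1),
        if i + j + k = n then
          (multinomial3 n i j k : ZMod p) * (n.choose i : ZMod p) * (n.choose k : ZMod p) *
            z1 ^ i * z2 ^ k
        else 0)
      = ∑ i ∈ range (n + 1), ∑ k ∈ range (n - i + 1),
          (n.choose i : ZMod p) * ((n - i).choose k : ZMod p) * (n.choose i : ZMod p) *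
            (n.choose k : ZMod p) * z1 ^ i * z2 ^ k := by
    refine Finset.sum_congr rfl fun i hi => ?_
    have hi' : i ≤ n := by have := mem_range.mp hi; omega
    rw [Finset.sum_comm]
    calc ∑ k ∈ range (n + 1), ∑ j ∈ range (n + 1),
          (if i + j + k = n then
            (multinomial3 n i j k : ZMod p) * (n.choose i : ZMod p) * (n.choose k : ZMod p) *
              z1 ^ i * z2 ^ k
          else 0)
        = ∑ k ∈ range (n + 1), (if i + k ≤ n then
            (multinomial3 n i (n - (i + k)) k : ZMod p) * (n.choose i : ZMod p) *
              (n.choose k : ZMod p) * z1 ^ i * z2 ^ k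
          else 0) := by
          refine Finset.sum_congr rfl fun k _ => ?_
          exact R2 (fun j => (multinomial3 n i j k : ZMod p) * (n.choose i : ZMod p) *
            (n.choose k : ZMod p) * z1 ^ i * z2 ^ k) i k
      _ = ∑ k ∈ range (n - i + 1), (if i + k ≤ n then
            (multinomial3 n i (n - (i + k)) k : ZMod p) * (n.choose i : ZMod p) *
              (n.choose k : ZMod p) * z1 ^ i * z2 ^ k
          else 0) := by
          refine (Finset.sum_subset (Finset.range_subset_range.mpr (by omega)) ?_).symm
          intro k hk hk2
          rw [mem_range] at hk hk2
          exact if_neg (by omega)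
      _ = ∑ k ∈ range (n - i + 1),
            (n.choose i : ZMod p) * ((n - i).choose k : ZMod p) * (n.choose i : ZMod p) *
              (n.choose k : ZMod p) * z1 ^ i * z2 ^ k := by
          refine Finset.sum_congr rfl fun k hk => ?_
          have hk' : k ≤ n - i := by have := mem_range.mp hk; omega
          rw [if_pos (by omega)]
          have hm := mult3 i (n - (i + k)) k
          rw [show i + (n - (i + k)) + k = n by omega,
            show n - (i + k) + k = n - i by omega] at hm
          rw [hm]
          push_cast
          ring
  rw [hL, hR]
end

section
/- Let p be an odd prime and z₁ ∈ F_p. Then ∑_{x,v ∈ F_p} (v(1−v)x(1−x)(1−z₁v))^((p-1)/2) is congruent modulo p to ∑_{j=0}^{(p-1)/2} C((p-1)/2, j)² z₁^j. -/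
open Finset

lemma aux_S (p : ℕ) [Fact p.Prime] (n : ℕ) (h0 : n ≠ 0) :
    ∑ x : ZMod p, x ^ n = if (p - 1) ∣ n then -1 else 0 := by
  classical
  have hcard : Fintype.card (ZMod p) = p := ZMod.card p
  have h1 : (∑ x : ZMod p, x ^ n) = ∑ u : (ZMod p)ˣ, ((u : ZMod p)) ^ n := by
    let φ : (ZMod p)ˣ ↪ ZMod p := ⟨fun x => x, Units.val_injective⟩
    have huniv : Finset.univ.map φ = Finset.univ \ {0} := by
      ext x
      simpa only [Finset.mem_map, Finset.mem_univ, Function.Embedding.coeFn_mk, true_and,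
        Finset.mem_sdiff, Finset.mem_singleton, φ] using (show (∃ a : (ZMod p)ˣ, (a : ZMod p) = x) ↔ ¬ x = 0 from
          ⟨fun ⟨a, ha⟩ => ha ▸ a.ne_zero, fun h => ⟨Units.mk0 x h, rfl⟩⟩)
    calc
      ∑ x : ZMod p, x ^ n = ∑ x ∈ Finset.univ \ {(0 : ZMod p)}, x ^ n := by
        rw [← Finset.sum_sdiff (Finset.subset_univ ({0} : Finset (ZMod p))),
          Finset.sum_singleton, zero_pow h0, add_zero]
      _ = ∑ u : (ZMod p)ˣ, ((u : ZMod p)) ^ n := by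
        rw [← huniv, Finset.sum_map]
        rfl
  rw [h1]
  have := FiniteField.sum_pow_units (ZMod p) n
  rwa [hcard] at this

theorem stmt_8 (p : ℕ) [Fact p.Prime] (hodd : p ≠ 2) (z1 : ZMod p) :
    (∑ x : ZMod p, ∑ v : ZMod p,
        (v * (1 - v) * x * (1 - x) * (1 - z1 * v)) ^ ((p - 1) / 2))
      = ∑ j ∈ Finset.range ((p - 1) / 2 + 1),
          ((((p - 1) / 2).choose j) ^ 2 : ZMod p) * z1 ^ j := by
  classical
  have hp : p.Prime := Fact.out
  have hp2 : 2 < p := lt_of_le_of_ne hp.two_le (Ne.symm hodd)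
  set m := (p - 1) / 2 with hm_def
  have hpm : p - 1 = 2 * m := by
    have : ¬ 2 ∣ p := by
      rw [Nat.prime_dvd_prime_iff_eq Nat.prime_two hp]; omega
    omega
  have hm0 : m ≠ 0 := by omega
  -- sum of powers lemma specialized
  have S : ∀ n : ℕ, 0 < n → n ≤ 3 * m → (∑ x : ZMod p, x ^ n) = if n = 2 * m then -1 else 0 := by
    intro n h0 h3
    rw [aux_S p n (by omega)]
    by_cases h : n = 2 * m
    · rw [if_pos h, if_pos (by rw [h, hpm])]
    · rw [if_neg h, if_neg ?_]
      rw [hpm]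
      rintro ⟨c, rfl⟩
      have hc : c ≤ 1 := by nlinarith
      interval_cases c <;> omega
  -- binomial expansion
  have expand : ∀ y : ZMod p, (1 - y) ^ m
      = ∑ j ∈ range (m + 1), (-1 : ZMod p) ^ j * (m.choose j : ZMod p) * y ^ j := by
    intro y
    rw [sub_eq_add_neg, add_comm, add_pow]
    refine Finset.sum_congr rfl fun j hj => ?_
    rw [neg_pow]
    ring
  -- factor the double sum
  have hfactor : (∑ x : ZMod p, ∑ v : ZMod p,
        (v * (1 - v) * x * (1 - x) * (1 - z1 * v)) ^ m)
      = (∑ x : ZMod p, (x * (1 - x)) ^ m)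
        * (∑ v : ZMod p, (v * (1 - v) * (1 - z1 * v)) ^ m) := by
    rw [Finset.sum_mul_sum]
    refine Finset.sum_congr rfl fun x _ => Finset.sum_congr rfl fun v _ => ?_
    rw [← mul_pow]
    congr 1
    ring
  -- compute A
  have hA : (∑ x : ZMod p, (x * (1 - x)) ^ m) = (-1 : ZMod p) ^ (m + 1) := by
    have h1 : ∀ x : ZMod p, (x * (1 - x)) ^ m
        = ∑ j ∈ range (m + 1), (-1 : ZMod p) ^ j * (m.choose j : ZMod p) * x ^ (m + j) := by
      intro x
      rw [mul_pow, expand, Finset.mul_sum]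
      refine Finset.sum_congr rfl fun j hj => ?_
      rw [pow_add]; ring
    simp only [h1]
    rw [Finset.sum_comm]
    have h2 : ∀ j ∈ range (m + 1),
        (∑ x : ZMod p, (-1 : ZMod p) ^ j * (m.choose j : ZMod p) * x ^ (m + j))
        = (-1 : ZMod p) ^ j * (m.choose j : ZMod p) * (if m + j = 2 * m then -1 else 0) := by
      intro j hj
      simp only [Finset.mem_range] at hj
      rw [← Finset.mul_sum, S (m + j) (by omega) (by omega)]
    rw [Finset.sum_congr rfl h2, Finset.sum_eq_single m]
    · rw [if_pos (by omega), Nat.choose_self]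
      push_cast
      ring
    · intro j hj hne
      simp only [Finset.mem_range] at hj
      rw [if_neg (by omega), mul_zero]
    · intro h; exact absurd (Finset.self_mem_range_succ m) h
  -- compute B
  have hB : (∑ v : ZMod p, (v * (1 - v) * (1 - z1 * v)) ^ m)
      = (-1 : ZMod p) ^ (m + 1) * ∑ j ∈ range (m + 1), ((m.choose j : ZMod p)) ^ 2 * z1 ^ j := by
    have h1 : ∀ v : ZMod p, (v * (1 - v) * (1 - z1 * v)) ^ m
        = ∑ j ∈ range (m + 1), ∑ k ∈ range (m + 1),
            (-1 : ZMod p) ^ (j + k) * (m.choose j : ZMod p) * (m.choose k : ZMod p)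
              * z1 ^ k * v ^ (m + j + k) := by
      intro v
      rw [mul_pow, mul_pow, expand, expand (z1 * v), mul_assoc, Finset.sum_mul_sum, Finset.mul_sum]
      refine Finset.sum_congr rfl fun j hj => ?_
      rw [Finset.mul_sum]
      refine Finset.sum_congr rfl fun k hk => ?_
      rw [pow_add, pow_add, pow_add, mul_pow]
      ring
    simp only [h1]
    rw [Finset.sum_comm]
    have h2 : ∀ j ∈ range (m + 1),
        (∑ v : ZMod p, ∑ k ∈ range (m + 1),
            (-1 : ZMod p) ^ (j + k) * (m.choose j : ZMod p) * (m.choose k : ZMod p)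
              * z1 ^ k * v ^ (m + j + k))
        = (-1 : ZMod p) ^ (m + 1) * (m.choose (m - j) : ZMod p) ^ 2 * z1 ^ (m - j) := by
      intro j hj
      simp only [Finset.mem_range] at hj
      rw [Finset.sum_comm]
      have h3 : ∀ k ∈ range (m + 1),
          (∑ v : ZMod p, (-1 : ZMod p) ^ (j + k) * (m.choose j : ZMod p) * (m.choose k : ZMod p)
              * z1 ^ k * v ^ (m + j + k))
          = (-1 : ZMod p) ^ (j + k) * (m.choose j : ZMod p) * (m.choose k : ZMod p)
              * z1 ^ k * (if m + j + k = 2 * m then -1 else 0) := by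
        intro k hk
        simp only [Finset.mem_range] at hk
        rw [← Finset.mul_sum, S (m + j + k) (by omega) (by omega)]
      rw [Finset.sum_congr rfl h3, Finset.sum_eq_single (m - j)]
      · rw [if_pos (by omega)]
        have hjm : j ≤ m := by omega
        have hjk : j + (m - j) = m := by omega
        have hch : (m.choose j : ZMod p) = (m.choose (m - j) : ZMod p) := by
          rw [Nat.choose_symm hjm]
        rw [hjk, hch, pow_succ]
        ring
      · intro k hk hne
        simp only [Finset.mem_range] at hk
        rw [if_neg (by omega), mul_zero]
      · intro h
        exact absurd (Finset.mem_range.mpr (by omega)) h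
    rw [Finset.sum_congr rfl h2, Finset.mul_sum]
    have hrefl := Finset.sum_range_reflect
      (fun k => (-1 : ZMod p) ^ (m + 1) * (m.choose k : ZMod p) ^ 2 * z1 ^ k) (m + 1)
    simp only [Nat.add_sub_cancel] at hrefl
    calc (∑ j ∈ range (m + 1),
            (-1 : ZMod p) ^ (m + 1) * (m.choose (m - j) : ZMod p) ^ 2 * z1 ^ (m - j))
        = ∑ j ∈ range (m + 1), (-1 : ZMod p) ^ (m + 1) * (m.choose j : ZMod p) ^ 2 * z1 ^ j := by
          exact hrefl
      _ = _ := by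
          refine Finset.sum_congr rfl fun j hj => ?_
          ring
  rw [hfactor, hA, hB, ← mul_assoc, ← pow_add, ← two_mul, pow_mul]
  norm_num
end

section
/- Let p be an odd prime, N = (p-1)/2, and z₁, z₂ ∈ F_p. Define the truncated Appell series F_{2,N}(z₁,z₂) = ∑_{k=0}^{N} ∑_{m+n=k} [(1/2)_{m+n}(1/2)_m(1/2)_n / ((1)_m(1)_n m! n!)] z₁^m z₂^n, with coefficients reduced mod p. Then F_{2,N}(z₁,z₂) = ∑_{i+j+k=N} M(N; i,j,k)·C(N,i)·C(N,j)·z₁^i z₂^j in F_p. -/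
open Finset

/-- The Pochhammer symbol `(a)_n = a(a+1)⋯(a+n-1)` over `ℚ`. -/
def poch (a : ℚ) (n : ℕ) : ℚ := ∏ i ∈ Finset.range n, (a + i)

/-- The coefficient of `z₁^m z₂^n` in Appell's hypergeometric series
`F₂(1/2; 1/2, 1/2; 1, 1; z₁, z₂)`. -/
def appellCoeff (m n : ℕ) : ℚ :=
  poch (1/2) (m + n) * poch (1/2) m * poch (1/2) n /
    (poch 1 m * poch 1 n * m.factorial * n.factorial)

/-! ### Auxiliary lemmas -/

lemma poch_one' (m : ℕ) : poch 1 m = m.factorial := by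
  induction m with
  | zero => simp [poch]
  | succ n ih =>
    rw [poch, Finset.prod_range_succ, ← poch, ih, Nat.factorial_succ]
    push_cast; ring

lemma poch_half' (m : ℕ) :
    poch (1/2) m = ((2*m).factorial : ℚ) / (4^m * m.factorial) := by
  induction m with
  | zero => simp [poch]
  | succ n ih =>
    rw [poch, Finset.prod_range_succ, ← poch, ih]
    have h1 : 2 * (n+1) = (2*n+1) + 1 := by ring
    rw [h1, Nat.factorial_succ, show 2*n+1 = (2*n)+1 from rfl, Nat.factorial_succ,
      Nat.factorial_succ]
    have h4 : (4:ℚ)^n ≠ 0 := by positivity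
    have hf : ((n.factorial : ℚ)) ≠ 0 := by exact_mod_cast n.factorial_ne_zero
    field_simp
    push_cast; ring

lemma appell_eq' (m n : ℕ) :
    appellCoeff m n * (16:ℚ)^(m+n)
      = (((m+n).choose m * (2*(m+n)).choose (m+n) * (2*m).choose m * (2*n).choose n : ℕ) : ℚ) := by
  have hc1 : (((m+n).choose m : ℕ) : ℚ) = ((m+n).factorial : ℚ) / (m.factorial * n.factorial) := by
    rw [Nat.cast_choose ℚ (Nat.le_add_right m n), show m+n-m = n from by omega]
  have hc2 : (((2*(m+n)).choose (m+n) : ℕ) : ℚ)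
      = ((2*(m+n)).factorial : ℚ) / ((m+n).factorial * (m+n).factorial) := by
    rw [Nat.cast_choose ℚ (by omega), show 2*(m+n)-(m+n) = m+n from by omega]
  have hc3 : (((2*m).choose m : ℕ) : ℚ)
      = ((2*m).factorial : ℚ) / (m.factorial * m.factorial) := by
    rw [Nat.cast_choose ℚ (by omega), show 2*m-m = m from by omega]
  have hc4 : (((2*n).choose n : ℕ) : ℚ)
      = ((2*n).factorial : ℚ) / (n.factorial * n.factorial) := by
    rw [Nat.cast_choose ℚ (by omega), show 2*n-n = n from by omega]
  have h16 : (16:ℚ)^(m+n) = 4^(m+n) * (4^m * 4^n) := by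
    rw [← pow_add, show (16:ℚ) = 4*4 by norm_num, mul_pow, ← pow_add]
  have hfm : ((m.factorial : ℚ)) ≠ 0 := by exact_mod_cast m.factorial_ne_zero
  have hfn : ((n.factorial : ℚ)) ≠ 0 := by exact_mod_cast n.factorial_ne_zero
  have hfmn : (((m+n).factorial : ℚ)) ≠ 0 := by exact_mod_cast (m+n).factorial_ne_zero
  have h4m : (4:ℚ)^m ≠ 0 := by positivity
  have h4n : (4:ℚ)^n ≠ 0 := by positivity
  have h4mn : (4:ℚ)^(m+n) ≠ 0 := by positivity
  rw [appellCoeff, poch_one', poch_one', poch_half', poch_half', poch_half']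
  push_cast [hc1, hc2, hc3, hc4]
  rw [h16]
  field_simp

lemma two_ne' (p : ℕ) [hp : Fact p.Prime] (hodd : p ≠ 2) : (2 : ZMod p) ≠ 0 := by
  have : ((2:ℕ) : ZMod p) ≠ 0 := by
    rw [Ne, ZMod.natCast_eq_zero_iff]
    intro h
    exact hodd ((Nat.prime_dvd_prime_iff_eq hp.out Nat.prime_two).mp h)
  simpa using this

lemma twoN' (p : ℕ) [hp : Fact p.Prime] (hodd : p ≠ 2) :
    (2 : ZMod p) * (((p-1)/2 : ℕ) : ZMod p) = -1 := by
  rcases hp.out.eq_two_or_odd' with h | h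
  · exact absurd h hodd
  obtain ⟨t, ht⟩ := h
  have h1 : 2 * ((p-1)/2) = p - 1 := by omega
  have h2 : (2:ZMod p) * ((p-1)/2 : ℕ) = ((2 * ((p-1)/2) : ℕ) : ZMod p) := by push_cast; ring
  rw [h2, h1]
  have hp2 : 1 ≤ p := hp.out.one_lt.le
  have h3 : ((p - 1 : ℕ) : ZMod p) = (p : ZMod p) - 1 := by
    push_cast [Nat.cast_sub hp2]; ring
  rw [h3, ZMod.natCast_self]; ring

lemma N_lt' (p : ℕ) [hp : Fact p.Prime] : (p - 1) / 2 < p := by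
  have := hp.out.two_le; omega

lemma fact_ne' (p : ℕ) [hp : Fact p.Prime] {m : ℕ} (hm : m ≤ (p-1)/2) :
    (m.factorial : ZMod p) ≠ 0 := by
  rw [Ne, ZMod.natCast_eq_zero_iff]
  intro h
  have h2 := (Nat.Prime.dvd_factorial hp.out).mp h
  have h3 : (p-1)/2 < p := N_lt' p
  omega

lemma rat_cast_of_mul_eq' (p : ℕ) [hp : Fact p.Prime] (q : ℚ) (a b : ℕ)
    (hb : (b : ZMod p) ≠ 0) (h : q * b = a) : (q : ZMod p) = (a : ZMod p) / b := by
  have hbn : b ≠ 0 := by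
    intro h'; subst h'; simp at hb
  have hb0 : (b : ℚ) ≠ 0 := by exact_mod_cast hbn
  have hq : q = Rat.divInt (a : ℤ) (b : ℤ) := by
    rw [Rat.divInt_eq_div]
    push_cast
    field_simp at h ⊢
    exact_mod_cast h
  rw [hq, Rat.cast_divInt_of_ne_zero _ (by exact_mod_cast hb)]
  push_cast
  rfl

lemma fact_split' (m : ℕ) :
    (2*m).factorial = 2^m * m.factorial * ∏ i ∈ Finset.range m, (2*i+1) := by
  induction m with
  | zero => simp
  | succ n ih =>
    rw [show 2*(n+1) = (2*n+1)+1 from by ring, Nat.factorial_succ,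
      show 2*n+1 = (2*n)+1 from rfl, Nat.factorial_succ, ih, Finset.prod_range_succ,
      Nat.factorial_succ]
    ring

lemma descF_cast' (p : ℕ) [hp : Fact p.Prime] {N m : ℕ} (hm : m ≤ N) :
    ((N.choose m : ZMod p)) * (m.factorial : ZMod p)
      = ∏ i ∈ Finset.range m, ((N : ZMod p) - (i : ℕ)) := by
  have h1 : N.choose m * m.factorial = N.descFactorial m := by
    rw [Nat.descFactorial_eq_factorial_mul_choose]; ring
  have h2 : ((N.choose m * m.factorial : ℕ) : ZMod p) = ((N.descFactorial m : ℕ) : ZMod p) := by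
    rw [h1]
  push_cast at h2
  rw [h2, Nat.descFactorial_eq_prod_range]
  push_cast
  apply Finset.prod_congr rfl
  intro i hi
  simp only [Finset.mem_range] at hi
  rw [Nat.cast_sub (by omega)]

lemma central' (p : ℕ) [hp : Fact p.Prime] (hodd : p ≠ 2) {m : ℕ} (hm : m ≤ (p-1)/2) :
    (((2*m).choose m : ℕ) : ZMod p)
      = 4^m * (-1)^m * (((p-1)/2).choose m : ZMod p) := by
  set N := (p-1)/2 with hN
  have h2 : (2 : ZMod p) ≠ 0 := two_ne' p hodd
  have hodd_prod : ((∏ i ∈ Finset.range m, (2*i+1) : ℕ) : ZMod p)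
      = 2^m * ((-1)^m * ((N.choose m : ZMod p)) * (m.factorial : ZMod p)) := by
    push_cast
    have hpt : ∀ i ∈ Finset.range m, (2*(i:ZMod p)+1) = 2 * ((i:ZMod p) - (N:ℕ)) := by
      intro i _
      have h := twoN' p hodd
      rw [← hN] at h
      linear_combination h
    rw [Finset.prod_congr rfl hpt, Finset.prod_mul_distrib, Finset.prod_const,
      Finset.card_range]
    congr 1
    rw [mul_assoc, descF_cast' p hm,
      show ((-1:ZMod p))^m = ∏ _i ∈ Finset.range m, (-1 : ZMod p) from by simp,
      ← Finset.prod_mul_distrib]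
    apply Finset.prod_congr rfl
    intro i _
    ring
  have hkey : (((2*m).factorial : ℕ) : ZMod p)
      = 2^m * (m.factorial : ZMod p) * ((∏ i ∈ Finset.range m, (2*i+1) : ℕ) : ZMod p) := by
    rw [fact_split']; push_cast; ring
  have hchoose : (2*m).choose m * m.factorial * m.factorial = (2*m).factorial := by
    have := Nat.choose_mul_factorial_mul_factorial (show m ≤ 2*m by omega)
    rwa [show 2*m - m = m from by omega] at this
  have hcast : (((2*m).choose m : ℕ) : ZMod p) * (m.factorial : ZMod p) * (m.factorial : ZMod p)
      = (((2*m).factorial : ℕ) : ZMod p) := by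
    rw [← hchoose]; push_cast; ring
  have hfne : (m.factorial : ZMod p) ≠ 0 := fact_ne' p hm
  apply mul_right_cancel₀ hfne
  apply mul_right_cancel₀ hfne
  rw [hcast, hkey, hodd_prod,
    show (4 : ZMod p)^m = 2^m * 2^m from by rw [← mul_pow]; norm_num]
  ring

lemma pow16_ne' (p : ℕ) [hp : Fact p.Prime] (hodd : p ≠ 2) (k : ℕ) :
    ((16:ZMod p)^k) ≠ 0 := by
  have h2 : (2 : ZMod p) ≠ 0 := two_ne' p hodd
  rw [show (16 : ZMod p) = 2^4 from by norm_num, ← pow_mul]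
  exact pow_ne_zero _ h2

lemma coeff_cast' (p : ℕ) [hp : Fact p.Prime] (hodd : p ≠ 2) {m n : ℕ}
    (hmn : m + n ≤ (p-1)/2) :
    ((appellCoeff m n : ℚ) : ZMod p)
      = (((p-1)/2).choose (m+n) : ZMod p) * ((m+n).choose m : ZMod p)
        * (((p-1)/2).choose m : ZMod p) * (((p-1)/2).choose n : ZMod p) := by
  set N := (p-1)/2 with hN
  have h16 : ((16^(m+n) : ℕ) : ZMod p) ≠ 0 := by
    push_cast; exact pow16_ne' p hodd (m+n)
  have hcast := rat_cast_of_mul_eq' p (appellCoeff m n)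
    ((m+n).choose m * (2*(m+n)).choose (m+n) * (2*m).choose m * (2*n).choose n)
    (16^(m+n)) h16 (by exact_mod_cast appell_eq' m n)
  rw [hcast]
  push_cast
  rw [central' p hodd (show m+n ≤ N from hmn), central' p hodd (show m ≤ N from by omega),
    central' p hodd (show n ≤ N from by omega)]
  have h16ne : ((16:ZMod p))^(m+n) ≠ 0 := pow16_ne' p hodd (m+n)
  rw [div_eq_iff h16ne]
  have hs : ((-1:ZMod p))^(m+n) * ((-1:ZMod p)^m * (-1:ZMod p)^n) = 1 := by
    rw [← pow_add, ← pow_add]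
    exact Even.neg_one_pow ⟨m+n, by ring⟩
  have h16' : (16:ZMod p)^(m+n) = 4^(m+n) * (4^m * 4^n) := by
    rw [show (16:ZMod p) = 4*4 from by norm_num, mul_pow, ← pow_add, ← pow_add]
    ring_nf
  linear_combination
    ((N.choose (m+n) : ZMod p) * ((m+n).choose m : ZMod p) * (N.choose m : ZMod p)
      * (N.choose n : ZMod p) * (4^(m+n) * (4^m * 4^n))) * hs
    - ((N.choose (m+n) : ZMod p) * ((m+n).choose m : ZMod p) * (N.choose m : ZMod p)
      * (N.choose n : ZMod p)) * h16'

lemma multinomial3_eq' {N i j : ℕ} (h : i + j ≤ N) :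
    multinomial3 N i j (N - (i+j)) = N.choose (i+j) * (i+j).choose i := by
  rw [multinomial3, if_pos (by omega)]
  apply Nat.div_eq_of_eq_mul_left
  · positivity
  have h1 := Nat.choose_mul_factorial_mul_factorial h
  have h2 := Nat.choose_mul_factorial_mul_factorial (Nat.le_add_right i j)
  rw [show i+j-i = j from by omega] at h2
  rw [← h1, ← h2]
  ring

lemma triangle_sum' {M : Type*} [AddCommMonoid M] (f : ℕ → ℕ → M) (N : ℕ) :
    ∑ k ∈ Finset.range (N+1), ∑ m ∈ Finset.range (k+1), f m (k-m)
      = ∑ i ∈ Finset.range (N+1), ∑ j ∈ Finset.range (N+1),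
          if i + j ≤ N then f i j else 0 := by
  have hR : ∀ i ∈ Finset.range (N+1),
      (∑ j ∈ Finset.range (N+1), if i + j ≤ N then f i j else 0)
        = ∑ j ∈ (Finset.range (N+1)).filter (fun j => i + j ≤ N), f i j := fun i _ =>
    (Finset.sum_filter _ _).symm
  rw [Finset.sum_congr rfl hR,
    Finset.sum_sigma' (Finset.range (N+1)) (fun k => Finset.range (k+1))
      (fun k m => f m (k-m)),
    Finset.sum_sigma' (Finset.range (N+1))
      (fun i => (Finset.range (N+1)).filter (fun j => i + j ≤ N)) (fun i j => f i j)]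
  apply Finset.sum_nbij' (fun x => (⟨x.2, x.1 - x.2⟩ : (_ : ℕ) × ℕ))
    (fun y => (⟨y.1 + y.2, y.1⟩ : (_ : ℕ) × ℕ))
  · rintro ⟨k, m⟩ hx
    simp only [Finset.mem_sigma, Finset.mem_range, Finset.mem_filter] at hx ⊢
    omega
  · rintro ⟨i, j⟩ hy
    simp only [Finset.mem_sigma, Finset.mem_range, Finset.mem_filter] at hy ⊢
    omega
  · rintro ⟨k, m⟩ hx
    simp only [Finset.mem_sigma, Finset.mem_range] at hx
    exact Sigma.ext (by dsimp; omega) (by dsimp; exact HEq.rfl)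
  · rintro ⟨i, j⟩ hy
    simp
  · rintro ⟨k, m⟩ hx
    rfl

theorem stmt_14 (p : ℕ) [Fact p.Prime] (hodd : p ≠ 2) (z1 z2 : ZMod p) :
    (∑ k ∈ Finset.range ((p - 1) / 2 + 1), ∑ m ∈ Finset.range (k + 1),
        ((appellCoeff m (k - m) : ℚ) : ZMod p) * z1 ^ m * z2 ^ (k - m))
      = ∑ i ∈ Finset.range ((p - 1) / 2 + 1), ∑ j ∈ Finset.range ((p - 1) / 2 + 1),
          ∑ k ∈ Finset.range ((p - 1) / 2 + 1),
            if i + j + k = (p - 1) / 2 then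
              (multinomial3 ((p - 1) / 2) i j k : ZMod p) *
                (((p - 1) / 2).choose i : ZMod p) * (((p - 1) / 2).choose j : ZMod p) *
                z1 ^ i * z2 ^ j
            else 0 := by
  set N := (p-1)/2 with hN
  clear_value N
  calc
    (∑ k ∈ Finset.range (N + 1), ∑ m ∈ Finset.range (k + 1),
        ((appellCoeff m (k - m) : ℚ) : ZMod p) * z1 ^ m * z2 ^ (k - m))
      = ∑ k ∈ Finset.range (N + 1), ∑ m ∈ Finset.range (k + 1),
          (fun a b => (N.choose (a+b) : ZMod p) * ((a+b).choose a : ZMod p)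
            * (N.choose a : ZMod p) * (N.choose b : ZMod p) * z1 ^ a * z2 ^ b) m (k - m) := by
        apply Finset.sum_congr rfl
        intro k hk
        apply Finset.sum_congr rfl
        intro m hm
        simp only [Finset.mem_range] at hk hm
        have hle : m + (k - m) ≤ (p-1)/2 := by omega
        rw [coeff_cast' p hodd hle, ← hN]
    _ = ∑ i ∈ Finset.range (N + 1), ∑ j ∈ Finset.range (N + 1),
          if i + j ≤ N then
            (N.choose (i+j) : ZMod p) * ((i+j).choose i : ZMod p)
              * (N.choose i : ZMod p) * (N.choose j : ZMod p) * z1 ^ i * z2 ^ j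
          else 0 :=
        triangle_sum' (fun a b => (N.choose (a+b) : ZMod p) * ((a+b).choose a : ZMod p)
            * (N.choose a : ZMod p) * (N.choose b : ZMod p) * z1 ^ a * z2 ^ b) N
    _ = _ := by
        apply Finset.sum_congr rfl
        intro i hi
        apply Finset.sum_congr rfl
        intro j hj
        simp only [Finset.mem_range] at hi hj
        by_cases hij : i + j ≤ N
        · rw [if_pos hij]
          rw [Finset.sum_eq_single (N - (i+j))]
          · rw [if_pos (by omega), multinomial3_eq' hij]
            push_cast
            ring
          · intro k _ hne
            exact if_neg (fun hc => hne (by omega))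
          · intro habs
            exact absurd (Finset.mem_range.mpr (by omega)) habs
        · rw [if_neg hij]
          symm
          apply Finset.sum_eq_zero
          intro k _
          exact if_neg (fun hc => hij (by omega))
end

section
/- Let p be an odd prime, N = (p-1)/2. The truncated Appell series F_{2,N}(z₁,z₂) = ∑_{m+n ≤ N} c_{m,n} z₁^m z₂^n with c_{m,n} = (1/2)_{m+n}(1/2)_m(1/2)_n/((1)_m(1)_n m! n!) satisfies the first Appell differential relation modulo p: for all m, n with m+n ≤ N−1, the coefficient of z₁^m z₂^n in z₁(1−z₁)∂²F/∂z₁² − z₁z₂ ∂²F/∂z₁∂z₂ + (1 − 2z₁)∂F/∂z₁ − (1/2)z₂ ∂F/∂z₂ − (1/4)F vanishes in F_p. -/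
open Finset MvPolynomial

lemma poch_succ (a : ℚ) (n : ℕ) : poch a (n+1) = poch a n * (a + n) :=
  Finset.prod_range_succ _ _

def dd (k : ℕ) : ℕ := ∏ i ∈ Finset.range k, (2*i+1)
def nnum (u v : ℕ) : ℕ := dd (u+v) * dd u * dd v
def dden (u v : ℕ) : ℕ := 2^(2*(u+v)) * u.factorial^2 * v.factorial^2

lemma dd_succ (k : ℕ) : dd (k+1) = dd k * (2*k+1) := Finset.prod_range_succ _ _

lemma poch_half_mul (k : ℕ) : poch (1/2) k * 2^k = (dd k : ℚ) := by
  induction k with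
  | zero => simp [poch, dd]
  | succ k ih =>
    rw [poch_succ, dd_succ, pow_succ]
    push_cast
    linear_combination (2*(k:ℚ)+1) * ih

lemma poch_one_eq (k : ℕ) : poch 1 k = k.factorial := by
  induction k with
  | zero => simp [poch]
  | succ k ih =>
    rw [poch_succ, ih, Nat.factorial_succ]
    push_cast
    ring

lemma appell_eq (u v : ℕ) : appellCoeff u v = (nnum u v : ℚ) / (dden u v : ℚ) := by
  unfold appellCoeff nnum dden
  have h2 : (2:ℚ) ≠ 0 := two_ne_zero
  have e1 : poch (1/2) (u+v) = (dd (u+v) : ℚ) / 2^(u+v) := by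
    rw [eq_div_iff (by positivity), poch_half_mul]
  have e2 : poch (1/2) u = (dd u : ℚ) / 2^u := by
    rw [eq_div_iff (by positivity), poch_half_mul]
  have e3 : poch (1/2) v = (dd v : ℚ) / 2^v := by
    rw [eq_div_iff (by positivity), poch_half_mul]
  rw [e1, e2, e3, poch_one_eq, poch_one_eq]
  have f1 : (u.factorial : ℚ) ≠ 0 := Nat.cast_ne_zero.mpr u.factorial_ne_zero
  have f2 : (v.factorial : ℚ) ≠ 0 := Nat.cast_ne_zero.mpr v.factorial_ne_zero
  push_cast
  field_simp
  ring_nf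

lemma cast_nat_div (K : Type*) [DivisionRing K] (a b : ℕ) (hb : (b : K) ≠ 0) :
    ((((a : ℚ) / (b : ℚ) : ℚ)) : K) = (a : K) / (b : K) := by
  have hb' : (((b:ℤ) : K)) ≠ 0 := by push_cast; exact hb
  have key : (a:ℚ)/(b:ℚ) = Rat.divInt (a:ℤ) (b:ℤ) := by
    rw [Rat.divInt_eq_div]; push_cast; ring
  rw [key, Rat.cast_divInt_of_ne_zero _ hb']
  push_cast
  ring


lemma coeff_pderiv' {σ R : Type*} [CommSemiring R] [DecidableEq σ]
    (i : σ) (f : MvPolynomial σ R) (s : σ →₀ ℕ) :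
    coeff s (pderiv i f) = ((s i : R) + 1) * coeff (s + Finsupp.single i 1) f := by
  induction f using MvPolynomial.induction_on' with
  | monomial t a =>
    rw [pderiv_monomial, coeff_monomial, coeff_monomial]
    by_cases h : t = s + Finsupp.single i 1
    · subst h
      rw [if_pos (add_tsub_cancel_right _ _), if_pos rfl]
      simp [mul_comm]
    · rw [if_neg h, mul_zero]
      by_cases h2 : t - Finsupp.single i 1 = s
      · rw [if_pos h2]
        by_cases hti : t i = 0
        · simp [hti]
        · exfalso
          apply h
          have hle : Finsupp.single i 1 ≤ t := by
            rw [Finsupp.single_le_iff]; omega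
          rw [← h2, tsub_add_cancel_of_le hle]
      · rw [if_neg h2]
  | add f g hf hg => simp [hf, hg, mul_add]

lemma sS_inj (a b u v : ℕ) :
    (Finsupp.single (0:Fin 2) a + Finsupp.single 1 b
      = Finsupp.single 0 u + Finsupp.single 1 v) ↔ (a = u ∧ b = v) := by
  constructor
  · intro h
    have h0 := DFunLike.congr_fun h 0
    have h1 := DFunLike.congr_fun h 1
    simp [Finsupp.single_apply] at h0 h1
    exact ⟨h0, h1⟩
  · rintro ⟨rfl, rfl⟩; rfl

lemma d_apply0 (u v : ℕ) :
    ((Finsupp.single (0:Fin 2) u + Finsupp.single 1 v) : Fin 2 →₀ ℕ) 0 = u := by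
  simp [Finsupp.single_apply]

lemma d_apply1 (u v : ℕ) :
    ((Finsupp.single (0:Fin 2) u + Finsupp.single 1 v) : Fin 2 →₀ ℕ) 1 = v := by
  simp [Finsupp.single_apply]

lemma d_add0 (u v : ℕ) :
    (Finsupp.single (0:Fin 2) u + Finsupp.single 1 v) + Finsupp.single 0 1
      = Finsupp.single 0 (u+1) + Finsupp.single 1 v := by
  rw [Finsupp.single_add]; exact add_right_comm _ _ _

lemma d_add1 (u v : ℕ) :
    (Finsupp.single (0:Fin 2) u + Finsupp.single 1 v) + Finsupp.single 1 1
      = Finsupp.single 0 u + Finsupp.single 1 (v+1) := by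
  rw [Finsupp.single_add, add_assoc]

lemma cp0 {R : Type*} [CommSemiring R] (f : MvPolynomial (Fin 2) R) (u v : ℕ) :
    coeff (Finsupp.single 0 u + Finsupp.single 1 v) (pderiv 0 f)
      = ((u:R)+1) * coeff (Finsupp.single 0 (u+1) + Finsupp.single 1 v) f := by
  rw [coeff_pderiv', d_apply0, d_add0]

lemma cp1 {R : Type*} [CommSemiring R] (f : MvPolynomial (Fin 2) R) (u v : ℕ) :
    coeff (Finsupp.single 0 u + Finsupp.single 1 v) (pderiv 1 f)
      = ((v:R)+1) * coeff (Finsupp.single 0 u + Finsupp.single 1 (v+1)) f := by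
  rw [coeff_pderiv', d_apply1, d_add1]

lemma cX0 {R : Type*} [CommSemiring R] (f : MvPolynomial (Fin 2) R) (u v : ℕ) :
    coeff (Finsupp.single 0 (u+1) + Finsupp.single 1 v) (X 0 * f)
      = coeff (Finsupp.single 0 u + Finsupp.single 1 v) f := by
  rw [show (Finsupp.single (0:Fin 2) (u+1) + Finsupp.single 1 v)
      = Finsupp.single 0 1 + (Finsupp.single 0 u + Finsupp.single 1 v) by
    rw [Finsupp.single_add]; abel]
  exact coeff_X_mul _ _ _

lemma cX1 {R : Type*} [CommSemiring R] (f : MvPolynomial (Fin 2) R) (u v : ℕ) :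
    coeff (Finsupp.single 0 u + Finsupp.single 1 (v+1)) (X 1 * f)
      = coeff (Finsupp.single 0 u + Finsupp.single 1 v) f := by
  rw [show (Finsupp.single (0:Fin 2) u + Finsupp.single 1 (v+1))
      = Finsupp.single 1 1 + (Finsupp.single 0 u + Finsupp.single 1 v) by
    rw [Finsupp.single_add]; abel]
  exact coeff_X_mul _ _ _

lemma cX0_zero {R : Type*} [CommSemiring R] (f : MvPolynomial (Fin 2) R) (v : ℕ) :
    coeff (Finsupp.single 0 0 + Finsupp.single 1 v) (X 0 * f) = 0 := by
  rw [coeff_X_mul']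
  rw [if_neg]
  simp [Finsupp.mem_support_iff, d_apply0]

lemma cX1_zero {R : Type*} [CommSemiring R] (f : MvPolynomial (Fin 2) R) (u : ℕ) :
    coeff (Finsupp.single 0 u + Finsupp.single 1 0) (X 1 * f) = 0 := by
  rw [coeff_X_mul']
  rw [if_neg]
  simp [Finsupp.mem_support_iff, d_apply1]

lemma coeffF {R : Type*} [CommSemiring R] (N : ℕ) (c : ℕ → ℕ → R) (u v : ℕ) :
    coeff (Finsupp.single 0 u + Finsupp.single 1 v)
      ((∑ a ∈ range (N+1), ∑ b ∈ range (N+1), if a + b ≤ N then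
        monomial (Finsupp.single (0:Fin 2) a + Finsupp.single 1 b) (c a b) else 0))
      = if u + v ≤ N then c u v else 0 := by
  classical
  simp only [coeff_sum, apply_ite (coeff (Finsupp.single (0:Fin 2) u + Finsupp.single 1 v)),
    coeff_monomial, coeff_zero, sS_inj]
  rw [Finset.sum_eq_single u]
  · rw [Finset.sum_eq_single v]
    · by_cases h : u + v ≤ N <;> simp [h]
    · intro b _ hb
      simp [hb]
    · intro hv
      simp only [mem_range, not_lt] at hv
      have : ¬ (u + v ≤ N) := by omega
      simp [this]
  · intro a _ ha
    apply Finset.sum_eq_zero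
    intro b _
    simp [ha]
  · intro hu
    simp only [mem_range, not_lt] at hu
    apply Finset.sum_eq_zero
    intro b _
    have : ¬ (u + b ≤ N) := by omega
    simp [this]


lemma final_alg {K : Type*} [Field K] (x y A B : K) (hB : B ≠ 0) (h2 : (2:K) ≠ 0)
    (hx1 : x + 1 ≠ 0) :
    x * (x + 1) * ((2 * (x + y) + 1) * (2 * x + 1) * A / (4 * (x + 1) ^ 2 * B)) -
        x * (x - 1) * (A / B) - x * y * (A / B) +
      ((x + 1) * ((2 * (x + y) + 1) * (2 * x + 1) * A / (4 * (x + 1) ^ 2 * B)) -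
        2 * (x * (A / B))) -
      (2:K)⁻¹ * (y * (A / B)) - (4:K)⁻¹ * (A / B) = 0 := by
  have h4 : (4:K) ≠ 0 := by
    rw [show (4:K) = 2*2 by norm_num]
    exact mul_ne_zero h2 h2
  have hstep : (2*(x+y)+1)*(2*x+1)*A / (4*(x+1)^2*B)
      = (2*(x+y)+1)*(2*x+1)/(4*(x+1)^2) * (A/B) := by
    rw [div_mul_div_comm]
  rw [hstep]
  have hsmall : (2*(x+y)+1)*(2*x+1)/(4*(x+1)^2) * (x*(x+1) + (x+1))
      = (2*(x+y)+1)*(2*x+1)/4 := by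
    field_simp
  have hkey : x*(x+1)*((2*(x+y)+1)*(2*x+1)/(4*(x+1)^2) * (A/B))
      + (x+1)*((2*(x+y)+1)*(2*x+1)/(4*(x+1)^2) * (A/B))
      = (2*(x+y)+1)*(2*x+1)/4 * (A/B) := by
    linear_combination (A/B) * hsmall
  have c4 : (4:K) * (4:K)⁻¹ = 1 := mul_inv_cancel₀ h4
  have c24 : (2:K) * (4:K)⁻¹ = (2:K)⁻¹ := by
    rw [show (4:K) = 2*2 by norm_num, mul_inv]
    rw [← mul_assoc, mul_inv_cancel₀ h2, one_mul]
  linear_combination hkey + ((x^2+x*y+x)*(A/B))*c4 + (y*(A/B))*c24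

theorem stmt_15 (p : ℕ) [Fact p.Prime] (hodd : p ≠ 2) :
    ∀ m n : ℕ, m + n ≤ (p - 1) / 2 - 1 →
      (let N := (p - 1) / 2
       let F : MvPolynomial (Fin 2) (ZMod p) :=
         ∑ a ∈ Finset.range (N + 1), ∑ b ∈ Finset.range (N + 1),
           if a + b ≤ N then
             C ((appellCoeff a b : ℚ) : ZMod p) * X 0 ^ a * X 1 ^ b
           else 0
       MvPolynomial.coeff (Finsupp.single 0 m + Finsupp.single 1 n)
         (X 0 * (1 - X 0) * (pderiv 0 (pderiv 0 F))
           - X 0 * X 1 * (pderiv 1 (pderiv 0 F))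
           + (1 - 2 * X 0) * pderiv 0 F
           - C ((2 : ZMod p)⁻¹) * X 1 * pderiv 1 F
           - C ((4 : ZMod p)⁻¹) * F)) = 0 := by
  intro m n hmn
  dsimp only
  set N := (p - 1) / 2 with hNdef
  have hp3 : 3 ≤ p := by
    have := (Fact.out : p.Prime).two_le
    omega
  have hN1 : 1 ≤ N := by omega
  have hNp : N < p := by omega
  have hNm : m + n ≤ N := le_trans hmn (Nat.sub_le _ _)
  have hNm1 : m + 1 + n ≤ N := by omega
  have hFG : (∑ a ∈ Finset.range (N + 1), ∑ b ∈ Finset.range (N + 1),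
      if a + b ≤ N then C ((appellCoeff a b : ℚ) : ZMod p) * X 0 ^ a * X 1 ^ b else 0)
    = ∑ a ∈ Finset.range (N + 1), ∑ b ∈ Finset.range (N + 1),
      if a + b ≤ N then monomial (Finsupp.single (0:Fin 2) a + Finsupp.single 1 b)
        ((appellCoeff a b : ℚ) : ZMod p) else 0 := by
    refine Finset.sum_congr rfl fun a _ => Finset.sum_congr rfl fun b _ => ?_
    split
    · rw [C_apply, X_pow_eq_monomial, X_pow_eq_monomial, monomial_mul, monomial_mul,
        zero_add, mul_one, mul_one]
    · rfl
  rw [hFG]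
  set G : MvPolynomial (Fin 2) (ZMod p) :=
    ∑ a ∈ Finset.range (N + 1), ∑ b ∈ Finset.range (N + 1),
      if a + b ≤ N then monomial (Finsupp.single (0:Fin 2) a + Finsupp.single 1 b)
        ((appellCoeff a b : ℚ) : ZMod p) else 0 with hG
  have hFc : ∀ u v : ℕ, u + v ≤ N →
      coeff (Finsupp.single 0 u + Finsupp.single 1 v) G = ((appellCoeff u v : ℚ) : ZMod p) := by
    intro u v h
    rw [hG, coeffF, if_pos h]
  have hC2 : (C (2:ZMod p) : MvPolynomial (Fin 2) (ZMod p)) = 2 := map_ofNat _ 2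
  have hexp : X 0 * (1 - X 0) * (pderiv 0 (pderiv 0 G))
      - X 0 * X 1 * (pderiv 1 (pderiv 0 G)) + (1 - 2 * X 0) * pderiv 0 G
      - C ((2:ZMod p)⁻¹) * X 1 * pderiv 1 G - C ((4:ZMod p)⁻¹) * G
    = (X 0 * (pderiv 0 (pderiv 0 G)) - X 0 * (X 0 * (pderiv 0 (pderiv 0 G))))
      - X 0 * (X 1 * (pderiv 1 (pderiv 0 G)))
      + (pderiv 0 G - C 2 * (X 0 * pderiv 0 G))
      - C ((2:ZMod p)⁻¹) * (X 1 * pderiv 1 G) - C ((4:ZMod p)⁻¹) * G := by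
    rw [hC2]; ring
  rw [hexp]
  simp only [coeff_sub, coeff_add, coeff_C_mul]
  have e1 : coeff (Finsupp.single 0 m + Finsupp.single 1 n) (X 0 * (pderiv 0 (pderiv 0 G)))
      = (m:ZMod p)*((m:ZMod p)+1) * ((appellCoeff (m+1) n : ℚ) : ZMod p) := by
    match m with
    | 0 => rw [cX0_zero]; simp
    | (k+1) =>
      rw [cX0, cp0, cp0, hFc (k+2) n (by omega)]
      push_cast
      ring
  have e2 : coeff (Finsupp.single 0 m + Finsupp.single 1 n)
      (X 0 * (X 0 * (pderiv 0 (pderiv 0 G))))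
      = (m:ZMod p)*((m:ZMod p)-1) * ((appellCoeff m n : ℚ) : ZMod p) := by
    match m with
    | 0 => rw [cX0_zero]; simp
    | 1 => rw [cX0, cX0_zero]; simp
    | (k+2) =>
      rw [cX0, cX0, cp0, cp0, hFc (k+2) n (by omega)]
      push_cast
      ring
  have e3 : coeff (Finsupp.single 0 m + Finsupp.single 1 n)
      (X 0 * (X 1 * (pderiv 1 (pderiv 0 G))))
      = (m:ZMod p)*(n:ZMod p) * ((appellCoeff m n : ℚ) : ZMod p) := by
    match m with
    | 0 => rw [cX0_zero]; simp
    | (k+1) =>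
      match n with
      | 0 => rw [cX0, cX1_zero]; simp
      | (j+1) =>
        rw [cX0, cX1, cp1, cp0, hFc (k+1) (j+1) (by omega)]
        push_cast
        ring
  have e4 : coeff (Finsupp.single 0 m + Finsupp.single 1 n) (pderiv 0 G)
      = ((m:ZMod p)+1) * ((appellCoeff (m+1) n : ℚ) : ZMod p) := by
    rw [cp0, hFc (m+1) n (by omega)]
  have e5 : coeff (Finsupp.single 0 m + Finsupp.single 1 n) (X 0 * pderiv 0 G)
      = (m:ZMod p) * ((appellCoeff m n : ℚ) : ZMod p) := by
    match m with
    | 0 => rw [cX0_zero]; simp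
    | (k+1) =>
      rw [cX0, cp0, hFc (k+1) n (by omega)]
      push_cast
      ring
  have e6 : coeff (Finsupp.single 0 m + Finsupp.single 1 n) (X 1 * pderiv 1 G)
      = (n:ZMod p) * ((appellCoeff m n : ℚ) : ZMod p) := by
    match n with
    | 0 => rw [cX1_zero]; simp
    | (j+1) =>
      rw [cX1, cp1, hFc m (j+1) (by omega)]
      push_cast
      ring
  have e7 : coeff (Finsupp.single 0 m + Finsupp.single 1 n) G
      = ((appellCoeff m n : ℚ) : ZMod p) := hFc m n hNm
  rw [e1, e2, e3, e4, e5, e6, e7]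
  have h2ne : (2:ZMod p) ≠ 0 := by
    intro h
    have h2 : ((2:ℕ) : ZMod p) = 0 := by push_cast; exact h
    rw [ZMod.natCast_eq_zero_iff] at h2
    exact hodd ((Nat.prime_dvd_prime_iff_eq (Fact.out : p.Prime) Nat.prime_two).mp h2)
  have h4ne : (4:ZMod p) ≠ 0 := by
    rw [show (4:ZMod p) = 2*2 by norm_num]
    exact mul_ne_zero h2ne h2ne
  have hfac : ∀ u : ℕ, u ≤ N → ((u.factorial : ZMod p)) ≠ 0 := by
    intro u hu h0
    rw [ZMod.natCast_eq_zero_iff] at h0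
    have := (Nat.Prime.dvd_factorial (Fact.out : p.Prime)).mp h0
    omega
  have hden : ∀ u v : ℕ, u ≤ N → v ≤ N → ((dden u v : ZMod p)) ≠ 0 := by
    intro u v hu hv
    unfold dden
    push_cast
    exact mul_ne_zero (mul_ne_zero (pow_ne_zero _ h2ne) (pow_ne_zero _ (hfac u hu)))
      (pow_ne_zero _ (hfac v hv))
  have castA : ∀ u v : ℕ, u ≤ N → v ≤ N →
      ((appellCoeff u v : ℚ) : ZMod p) = (nnum u v : ZMod p) / (dden u v : ZMod p) := by
    intro u v hu hv
    rw [appell_eq]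
    exact cast_nat_div _ _ _ (hden u v hu hv)
  rw [castA (m+1) n (by omega) (by omega), castA m n (by omega) (by omega)]
  have hrecN : (nnum (m+1) n : ZMod p)
      = (((2*(m+n)+1) * (2*m+1) : ℕ) : ZMod p) * (nnum m n : ZMod p) := by
    have h : nnum (m+1) n = ((2*(m+n)+1) * (2*m+1)) * nnum m n := by
      unfold nnum
      rw [show m+1+n = (m+n)+1 by omega, dd_succ, dd_succ]
      ring
    rw [h]
    push_cast
    ring
  have hrecD : (dden (m+1) n : ZMod p)
      = (((2*2*(m+1)^2 : ℕ)) : ZMod p) * (dden m n : ZMod p) := by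
    have h : dden (m+1) n = (2*2*(m+1)^2) * dden m n := by
      unfold dden
      rw [show 2*(m+1+n) = 2*(m+n)+1+1 by omega, pow_succ, pow_succ, Nat.factorial_succ]
      ring
    rw [h]
    push_cast
    ring
  rw [hrecN, hrecD]
  have hB : ((dden m n : ZMod p)) ≠ 0 := hden m n (by omega) (by omega)
  have hm1 : ((m:ZMod p)+1) ≠ 0 := by
    have h0 : ((m+1 : ℕ) : ZMod p) ≠ 0 := by
      intro h0
      rw [ZMod.natCast_eq_zero_iff] at h0
      have := Nat.le_of_dvd (by omega) h0
      omega
    push_cast at h0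
    exact h0
  push_cast
  exact final_alg _ _ _ _ hB h2ne hm1
end
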